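/- If (v,u) ≈_k (x,y) with k ≥ 1, then for every label sequence ℓ₁⋯ℓ_j of length j ≤ k over labels and inverse labels, there is a path from v to u matching the sequence if and only if there is a path from x to y matching it; i.e., L^{≤k}(v,u) = L^{≤k}(x,y). -/
import Mathlib


/-- A step along an edge: `Sum.inl ℓ` traverses an edge labeled `ℓ` forwards,
`Sum.inr ℓ` traverses it backwards (the inverse label `ℓ⁻`). -/
def Matches {V L : Type*} (E : V → V → L → Prop) : List (L ⊕ L) → V → V → Prop
  | [], v, u => v = u
  | (Sum.inl ℓ) :: s, v, u => ∃ w, E v w ℓ ∧ Matches E s w u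
  | (Sum.inr ℓ) :: s, v, u => ∃ w, E w v ℓ ∧ Matches E s w u

/-- `(v,u) ∈ P^{≤k}`: `v` and `u` are connected by a path of length between 1 and `k`. -/
def Conn {V L : Type*} (E : V → V → L → Prop) (k : ℕ) (v u : V) : Prop :=
  ∃ s : List (L ⊕ L), s ≠ [] ∧ s.length ≤ k ∧ Matches E s v u

/-- `k`-path-bisimulation: `Bisim E k v u x y` means `(v,u) ≈_k (x,y)`. -/
def Bisim {V L : Type*} (E : V → V → L → Prop) : ℕ → V → V → V → V → Prop
  | 0, v, u, x, y => (v = u ↔ x = y)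
  | k + 1, v, u, x, y =>
    (v = u ↔ x = y) ∧
    (∀ ℓ, (E v u ℓ ↔ E x y ℓ) ∧ (E u v ℓ ↔ E y x ℓ)) ∧
    (1 ≤ k →
      (∀ m, Conn E k v m → Conn E k m u →
        ∃ m', Conn E k x m' ∧ Conn E k m' y ∧
          Bisim E k v m x m' ∧ Bisim E k m u m' y) ∧
      (∀ m, Conn E k x m → Conn E k m y →
        ∃ m', Conn E k v m' ∧ Conn E k m' u ∧
          Bisim E k x m v m' ∧ Bisim E k m y m' u))


lemma matches_append {V L : Type*} (E : V → V → L → Prop) (s t : List (L ⊕ L)) (v u : V) :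
    Matches E (s ++ t) v u ↔ ∃ m, Matches E s v m ∧ Matches E t m u := by
  induction s generalizing v with
  | nil => simp [Matches]
  | cons a s ih =>
    cases a <;>
    · constructor
      · rintro ⟨w, hw, hmm⟩
        obtain ⟨m, hm1, hm2⟩ := (ih w).mp hmm
        exact ⟨m, ⟨w, hw, hm1⟩, hm2⟩
      · rintro ⟨m, ⟨w, hw, hm1⟩, hm2⟩
        exact ⟨w, hw, (ih w).mpr ⟨m, hm1, hm2⟩⟩

lemma bisim_symm {V L : Type*} (E : V → V → L → Prop) :
    ∀ k v u x y, Bisim E k v u x y → Bisim E k x y v u := by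
  intro k
  induction k with
  | zero => intro v u x y h; exact h.symm
  | succ k ih =>
    intro v u x y h
    obtain ⟨h1, h2, h3⟩ := h
    exact ⟨h1.symm, fun ℓ => ⟨(h2 ℓ).1.symm, (h2 ℓ).2.symm⟩,
      fun hk => ⟨(h3 hk).2, (h3 hk).1⟩⟩

lemma bisim_matches {V L : Type*} (E : V → V → L → Prop) :
    ∀ k, ∀ v u x y : V, Bisim E k v u x y →
      ∀ s : List (L ⊕ L), 1 ≤ s.length → s.length ≤ k →
        Matches E s v u → Matches E s x y := by
  intro k
  induction k with
  | zero => intro v u x y h s hs1 hsk; omega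
  | succ k ih =>
    intro v u x y h s hs1 hsk hm
    obtain ⟨h1, h2, h3⟩ := h
    match s with
    | [Sum.inl ℓ] =>
      obtain ⟨w, hw, hw'⟩ := hm
      cases hw'
      exact ⟨y, (h2 ℓ).1.mp hw, rfl⟩
    | [Sum.inr ℓ] =>
      obtain ⟨w, hw, hw'⟩ := hm
      cases hw'
      exact ⟨y, (h2 ℓ).2.mp hw, rfl⟩
    | a :: b :: t =>
      have hk1 : 1 ≤ k := by simp at hsk; omega
      have hsplit : Matches E ([a] ++ (b :: t)) v u := hm
      rw [matches_append] at hsplit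
      obtain ⟨m, hm1, hm2⟩ := hsplit
      have c1 : Conn E k v m := ⟨[a], by simp, by simpa using hk1, hm1⟩
      have c2 : Conn E k m u := ⟨b :: t, by simp, by simp at hsk ⊢; omega, hm2⟩
      obtain ⟨m', _, _, b1, b2⟩ := (h3 hk1).1 m c1 c2
      have r1 := ih v m x m' b1 [a] (by simp) (by simpa using hk1) hm1
      have r2 := ih m u m' y b2 (b :: t) (by simp) (by simp at hsk ⊢; omega) hm2
      exact (matches_append E [a] (b :: t) x y).mpr ⟨m', r1, r2⟩

/-- k-path-bisimilar pairs (k ≥ 1) realize the same label sequences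
of length between 1 and k. -/
theorem bisim_label_sequences {V L : Type*} (E : V → V → L → Prop) (k : ℕ) (hk : 1 ≤ k)
    (v u x y : V) (h : Bisim E k v u x y) :
    {s : List (L ⊕ L) | 1 ≤ s.length ∧ s.length ≤ k ∧ Matches E s v u} =
    {s : List (L ⊕ L) | 1 ≤ s.length ∧ s.length ≤ k ∧ Matches E s x y} := by
  ext s
  simp only [Set.mem_setOf_eq]
  constructor
  · rintro ⟨a, b, c⟩
    exact ⟨a, b, bisim_matches E k v u x y h s a b c⟩
  · rintro ⟨a, b, c⟩
    exact ⟨a, b, bisim_matches E k x y v u (bisim_symm E k v u x y h) s a b c⟩
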